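/- arXiv:1710.01144 — 2 statements merged into one kernel-verified Lean document; each statement's English description precedes it below -/
import Mathlib

section
/- For any sets S ⊆ T ⊆ V and any node u ∈ V, the total distance function f(S) := Σ_{v∈V} d(S,v) satisfies the submodularity-type inequality: Σ_{v∈V} (d(S,v) − d(S∪{u},v)) ≥ Σ_{v∈V} (d(T,v) − d(T∪{u},v)). -/
lemma cast_inf'_aux {V : Type*} (s : Finset V) (h : s.Nonempty) (f : V → ℕ) :
    s.inf' h (fun x => (f x : ℤ)) = ((s.inf' h f : ℕ) : ℤ) := by
  rw [Finset.apply_inf'_eq_inf'_comp h (fun n : ℕ => (n : ℤ)) (fun x y => by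
    simp [Nat.cast_min])]
  rfl

/-- Submodularity-type inequality for the total-distance decrease:
for nonempty `S ⊆ T` and any `u`,
`Σ_v (d(S,v) − d(S∪{u},v)) ≥ Σ_v (d(T,v) − d(T∪{u},v))`. -/
theorem stmt1 {V : Type*} [Fintype V] [DecidableEq V] (G : SimpleGraph V) (hG : G.Connected)
    (S T : Finset V) (hS : S.Nonempty) (hST : S ⊆ T) (u : V) :
    ∑ v : V, ((T.inf' (hS.mono hST) (fun s => G.dist s v) : ℤ)
        - (insert u T).inf' (Finset.insert_nonempty _ _) (fun s => G.dist s v))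
      ≤ ∑ v : V, ((S.inf' hS (fun s => G.dist s v) : ℤ)
        - (insert u S).inf' (Finset.insert_nonempty _ _) (fun s => G.dist s v)) := by
  apply Finset.sum_le_sum
  intro v _
  have hba : T.inf' (hS.mono hST) (fun s => G.dist s v) ≤ S.inf' hS (fun s => G.dist s v) :=
    Finset.inf'_mono _ hST hS
  rw [Finset.inf'_insert (hS.mono hST), Finset.inf'_insert hS,
    cast_inf'_aux T (hS.mono hST) (fun s => G.dist s v),
    cast_inf'_aux S hS (fun s => G.dist s v)]
  omega
end

section
/- Pruning in of the SSSP search is sound: if, for node u and current set S, every node w with d(u,w) ≥ d(S,w) is excluded together with its entire shortest-path subtree, then the computed value Σ_{w visited} min(d(u,w), d(S,w)) + Σ_{w pruned} d(S,w) equals Σ_{w∈V} d(S∪{u}, w). -/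
theorem stmt12_general {V : Type*} [Fintype V] [DecidableEq V] (G : SimpleGraph V)
    (S : Finset V) (hS : S.Nonempty) (u : V) (P : Finset V)
    (hP : ∀ w ∈ P, S.inf' hS (fun s => G.dist s w) ≤ G.dist u w) :
    ∑ w ∈ Finset.univ \ P, min (G.dist u w) (S.inf' hS fun s => G.dist s w)
        + ∑ w ∈ P, S.inf' hS (fun s => G.dist s w)
      = ∑ w : V, (insert u S).inf' (Finset.insert_nonempty _ _) (fun s => G.dist s w) := by
  rw [← Finset.sum_sdiff (Finset.subset_univ P)]
  congr 1 <;> refine Finset.sum_congr rfl fun w hw => ?_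
  · exact (Finset.inf'_insert hS fun s => G.dist s w).symm
  · rw [Finset.inf'_insert hS]
    exact (min_eq_right (hP w hw)).symm

/-- Soundness of SSSP pruning: if every pruned node `w` satisfies `d(S,w) ≤ d(u,w)`, then
`Σ_{w visited} min(d(u,w), d(S,w)) + Σ_{w pruned} d(S,w) = Σ_{w∈V} d(S∪{u},w)`. -/
theorem stmt12 {V : Type*} [Fintype V] [DecidableEq V] (G : SimpleGraph V) (hG : G.Connected)
    (S : Finset V) (hS : S.Nonempty) (u : V) (P : Finset V)
    (hP : ∀ w ∈ P, S.inf' hS (fun s => G.dist s w) ≤ G.dist u w) :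
    ∑ w ∈ Finset.univ \ P, min (G.dist u w) (S.inf' hS fun s => G.dist s w)
        + ∑ w ∈ P, S.inf' hS (fun s => G.dist s w)
      = ∑ w : V, (insert u S).inf' (Finset.insert_nonempty _ _) (fun s => G.dist s w) :=
  stmt12_general G S hS u P hP
end
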